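/- The triadic measure μ on [0,1] defined by μ([0,1]) = 1, μ(I) = δ μ(πI) for I the middle third of πI, and μ(I) = ((1−δ)/2) μ(πI) for I an outer third of πI (0 < δ < 1/3), is doubling: for any two adjacent triadic intervals J₁, J₂ of the same length, μ(J₁) ≤ C_δ μ(J₂) where C_δ depends only on δ. -/

import Mathlib

open MeasureTheory ENNReal

/-- The triadic interval `[j/3^k, (j+1)/3^k)` of generation `k`. -/
def triSet (k j : ℕ) : Set ℝ := Set.Ico ((j : ℝ) / 3 ^ k) (((j : ℝ) + 1) / 3 ^ k)

/-- `μ` is the triadic measure with parameter `δ`: `μ([0,1]) = 1`, the middle triadic child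
gets fraction `δ` of the mass of its parent, and each outer child gets `(1-δ)/2`. -/
def IsTriadicMeasure (μ : Measure ℝ) (δ : ℝ) : Prop :=
  μ (triSet 0 0) = 1 ∧
  ∀ k j : ℕ, j < 3 ^ k →
    μ (triSet (k + 1) (3 * j)) = ENNReal.ofReal ((1 - δ) / 2) * μ (triSet k j) ∧
    μ (triSet (k + 1) (3 * j + 1)) = ENNReal.ofReal δ * μ (triSet k j) ∧
    μ (triSet (k + 1) (3 * j + 2)) = ENNReal.ofReal ((1 - δ) / 2) * μ (triSet k j)

/-!
Two adjacent triadic intervals of generation `k + 1` either are siblings, whose masses are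
`δ x` and `(1-δ)/2 · x` for the mass `x` of their parent, so their ratio lies between
`2δ/(1-δ)` and `(1-δ)/(2δ)`; or they are the right child of `J` and the left child of the
adjacent interval `J'` of generation `k`, both outer children, so their ratio equals that of
`J` and `J'`. Induction on `k` therefore gives the constant `C = (1-δ)/(2δ)`.
-/

def ENNReal.Comparable (C a b : ℝ≥0∞) : Prop := a ≤ C * b ∧ b ≤ C * a

namespace ENNReal.Comparable

variable {C a b : ℝ≥0∞}

theorem symm (h : Comparable C a b) : Comparable C b a := ⟨h.2, h.1⟩

theorem mul_right (h : Comparable C a b) (x : ℝ≥0∞) : Comparable C (a * x) (b * x) :=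
  ⟨(mul_le_mul_left h.1 x).trans_eq (mul_assoc _ _ _),
    (mul_le_mul_left h.2 x).trans_eq (mul_assoc _ _ _)⟩

theorem mul_left (h : Comparable C a b) (x : ℝ≥0∞) : Comparable C (x * a) (x * b) :=
  ⟨(mul_le_mul_right h.1 x).trans_eq (mul_left_comm _ _ _),
    (mul_le_mul_right h.2 x).trans_eq (mul_left_comm _ _ _)⟩

end ENNReal.Comparable

theorem IsTriadicMeasure.comparable_triSet_succ {μ : Measure ℝ} {δ : ℝ} {C : ℝ≥0∞}
    (hμ : IsTriadicMeasure μ δ)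
    (hC : Comparable C (ENNReal.ofReal ((1 - δ) / 2)) (ENNReal.ofReal δ)) :
    ∀ k j : ℕ, j + 1 < 3 ^ k → Comparable C (μ (triSet k j)) (μ (triSet k (j + 1))) := by
  intro k
  induction k with
  | zero => intro j hj; simp at hj
  | succ k ih =>
    intro j hj
    obtain ⟨q, r, hr, rfl⟩ : ∃ q r, r < 3 ∧ j = 3 * q + r :=
      ⟨j / 3, j % 3, Nat.mod_lt _ (by norm_num), (Nat.div_add_mod j 3).symm⟩
    have hq : q < 3 ^ k := by rw [pow_succ] at hj; omega
    obtain ⟨left, middle, right⟩ := hμ.2 k q hq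
    interval_cases r
    · rw [add_zero, left, middle]
      exact hC.mul_right _
    · rw [middle, right]
      exact hC.symm.mul_right _
    · have hq' : q + 1 < 3 ^ k := by rw [pow_succ] at hj; omega
      rw [show 3 * q + 2 + 1 = 3 * (q + 1) by ring, right, (hμ.2 k (q + 1) hq').1]
      exact (ih q hq').mul_left _

/-- The triadic measure with parameter `0 < δ < 1/3` is doubling: for any two
adjacent triadic intervals of the same generation the masses are comparable, with constant
depending only on `δ`. -/
theorem stmt_18 (μ : Measure ℝ) (δ : ℝ) (hδ0 : 0 < δ) (hδ : δ < 1 / 3)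
    (hμ : IsTriadicMeasure μ δ) :
    ∃ C > (0:ℝ), ∀ k j : ℕ, j + 1 < 3 ^ k →
      μ (triSet k j) ≤ ENNReal.ofReal C * μ (triSet k (j + 1)) ∧
      μ (triSet k (j + 1)) ≤ ENNReal.ofReal C * μ (triSet k j) := by
  set C : ℝ := (1 - δ) / (2 * δ)
  have hC0 : 0 < C := div_pos (by linarith) (by linarith)
  have hC1 : 1 ≤ C := by rw [le_div_iff₀ (by linarith)]; linarith
  have outer_eq : ENNReal.ofReal ((1 - δ) / 2) = ENNReal.ofReal C * ENNReal.ofReal δ := by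
    rw [← ENNReal.ofReal_mul hC0.le]
    congr 1
    simp only [C]
    field_simp
  have middle_le : ENNReal.ofReal δ ≤ ENNReal.ofReal C * ENNReal.ofReal ((1 - δ) / 2) :=
    calc ENNReal.ofReal δ ≤ ENNReal.ofReal ((1 - δ) / 2) := ENNReal.ofReal_le_ofReal (by linarith)
      _ ≤ ENNReal.ofReal C * ENNReal.ofReal ((1 - δ) / 2) :=
        le_mul_of_one_le_left' (ENNReal.one_le_ofReal.mpr hC1)
  exact ⟨C, hC0, hμ.comparable_triSet_succ ⟨outer_eq.le, middle_le⟩⟩
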